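/- arXiv:1208.3490 — 2 statements merged into one kernel-verified Lean document; each statement's English description precedes it below -/
import Mathlib

section
/- Let T be an ideal irreducible positive operator on a real Banach lattice X with dim X > 1. If Tx = λx for some x > 0 and λ ∈ ℝ, then x is a quasi-interior point of X and λ > 0. -/
open scoped ENNReal

variable {X : Type*}

def IsPositiveOp [NormedAddCommGroup X] [Lattice X] [IsOrderedAddMonoid X] [HasSolidNorm X] [NormedSpace ℝ X]
    (T : X →L[ℝ] X) : Prop := ∀ x : X, 0 ≤ x → 0 ≤ T x

def IsClosedIdeal [NormedAddCommGroup X] [Lattice X] [IsOrderedAddMonoid X] [HasSolidNorm X] [NormedSpace ℝ X]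
    (J : Submodule ℝ X) : Prop :=
  IsClosed (J : Set X) ∧ ∀ x y : X, |y| ≤ |x| → x ∈ J → y ∈ J

def IdealIrreducible [NormedAddCommGroup X] [Lattice X] [IsOrderedAddMonoid X] [HasSolidNorm X] [NormedSpace ℝ X]
    (T : X →L[ℝ] X) : Prop :=
  ∀ J : Submodule ℝ X, IsClosedIdeal J → (∀ x ∈ J, T x ∈ J) → J = ⊥ ∨ J = ⊤

/-- A band: a solid submodule closed under existing suprema. -/
def IsBand [NormedAddCommGroup X] [Lattice X] [IsOrderedAddMonoid X] [HasSolidNorm X] [NormedSpace ℝ X]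
    (J : Submodule ℝ X) : Prop :=
  (∀ x y : X, |y| ≤ |x| → x ∈ J → y ∈ J) ∧
    ∀ (A : Set X) (x : X), A ⊆ (J : Set X) → IsLUB A x → x ∈ J

def BandIrreducible [NormedAddCommGroup X] [Lattice X] [IsOrderedAddMonoid X] [HasSolidNorm X] [NormedSpace ℝ X]
    (T : X →L[ℝ] X) : Prop :=
  ∀ J : Submodule ℝ X, IsBand J → (∀ x ∈ J, T x ∈ J) → J = ⊥ ∨ J = ⊤

def QuasiInterior [NormedAddCommGroup X] [Lattice X] [IsOrderedAddMonoid X] [HasSolidNorm X] [NormedSpace ℝ X]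
    (x : X) : Prop :=
  closure {y : X | ∃ c : ℝ, |y| ≤ c • x} = Set.univ

/-- A weak (order) unit. -/
def WeakUnit [NormedAddCommGroup X] [Lattice X] [IsOrderedAddMonoid X] [HasSolidNorm X] [NormedSpace ℝ X]
    (x : X) : Prop := 0 < x ∧ ∀ y : X, |y| ⊓ x = 0 → y = 0

def IsPositiveFunc [NormedAddCommGroup X] [Lattice X] [IsOrderedAddMonoid X] [HasSolidNorm X] [NormedSpace ℝ X]
    (f : StrongDual ℝ X) : Prop := ∀ x : X, 0 ≤ x → 0 ≤ f x

def StrictlyPositiveFunc [NormedAddCommGroup X] [Lattice X] [IsOrderedAddMonoid X] [HasSolidNorm X] [NormedSpace ℝ X]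
    (f : StrongDual ℝ X) : Prop := ∀ x : X, 0 < x → 0 < f x

noncomputable def adjOp [NormedAddCommGroup X] [Lattice X] [IsOrderedAddMonoid X] [HasSolidNorm X] [NormedSpace ℝ X]
    (T : X →L[ℝ] X) : StrongDual ℝ X →L[ℝ] StrongDual ℝ X :=
  (ContinuousLinearMap.compL ℝ X X ℝ).flip T

/-- `T` is σ-order continuous: `x_n ↓ 0` implies `T x_n ↓ 0`. -/
def SigmaOrderContinuousOp [NormedAddCommGroup X] [Lattice X] [IsOrderedAddMonoid X] [HasSolidNorm X] [NormedSpace ℝ X]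
    (T : X →L[ℝ] X) : Prop :=
  ∀ u : ℕ → X, Antitone u → IsGLB (Set.range u) 0 →
    IsGLB (Set.range fun n => T (u n)) 0

/-- A σ-order continuous functional. -/
def SigmaOrderContinuousFunc [NormedAddCommGroup X] [Lattice X] [IsOrderedAddMonoid X] [HasSolidNorm X] [NormedSpace ℝ X]
    (f : StrongDual ℝ X) : Prop :=
  ∀ u : ℕ → X, Antitone u → IsGLB (Set.range u) 0 →
    Filter.Tendsto (fun n => f (u n)) Filter.atTop (nhds 0)

/-- A set is relatively weakly compact. -/
def RelWeaklyCompact [NormedAddCommGroup X] [Lattice X] [IsOrderedAddMonoid X] [HasSolidNorm X] [NormedSpace ℝ X]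
    (s : Set X) : Prop :=
  IsCompact (closure ((toWeakSpace ℝ X) '' s))

/-- `T` is order weakly compact: `T[0,x]` is relatively weakly compact for all `x > 0`. -/
def OrderWeaklyCompactOp [NormedAddCommGroup X] [Lattice X] [IsOrderedAddMonoid X] [HasSolidNorm X] [NormedSpace ℝ X]
    (T : X →L[ℝ] X) : Prop :=
  ∀ x : X, 0 < x → RelWeaklyCompact (T '' Set.Icc 0 x)

/-!
If `|y| ≤ c • x` then `|T y| ≤ T |y| ≤ (c * λ) • x`, so the closed ideal generated by the
eigenvector `x` is `T`-invariant and, containing `x ≠ 0`, is everything: `x` is quasi-interior.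
Positivity of `T` gives `λ ≥ 0`. If `λ = 0`, then `T` kills the ideal generated by `x`, hence
all of `X` by density. But every closed ideal is invariant under `T = 0`, while `dim X > 1`
provides disjoint `u, v > 0` (otherwise `X` is totally ordered, and then one-dimensional), and
the closed ideal generated by `u` does not contain `v`.
-/

open Filter Topology LatticeOrderedAddCommGroup

section LatticeOrderedGroup

variable {α : Type*} [Lattice α] [AddCommGroup α] [IsOrderedAddMonoid α]

theorem nonneg_of_two_pow_nsmul_nonneg {a : α} : ∀ k : ℕ, 0 ≤ 2 ^ k • a → 0 ≤ a
  | 0, h => by simpa using h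
  | k + 1, h => nonneg_of_two_pow_nsmul_nonneg k <|
      nsmul_two_semiclosed <| by rwa [smul_smul, ← pow_succ']

theorem dyadic_smul_nonneg [Module ℝ α] {x : α} (hx : 0 ≤ x) (m k : ℕ) :
    0 ≤ ((m : ℝ) / 2 ^ k) • x := by
  refine nonneg_of_two_pow_nsmul_nonneg k ?_
  rw [← Nat.cast_smul_eq_nsmul ℝ, smul_smul, Nat.cast_pow, Nat.cast_ofNat,
    mul_div_cancel₀ _ (by positivity), Nat.cast_smul_eq_nsmul]
  exact nsmul_nonneg hx m

theorem le_total_of_forall_inf_ne_zero (h : ∀ u v : α, 0 < u → 0 < v → u ⊓ v ≠ 0) (a b : α) :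
    a ≤ b ∨ b ≤ a := by
  by_contra! hab
  refine h (a - b)⁺ (a - b)⁻ ?_ ?_ (posPart_inf_negPart_eq_zero _)
  · exact (posPart_nonneg _).lt_of_ne' fun h0 => hab.1 (sub_nonpos.1 (posPart_eq_zero.1 h0))
  · exact (negPart_nonneg _).lt_of_ne' fun h0 => hab.2 (sub_nonneg.1 (negPart_eq_zero.1 h0))

end LatticeOrderedGroup

section SolidNorm

variable {E : Type*} [NormedAddCommGroup E] [Lattice E] [IsOrderedAddMonoid E] [HasSolidNorm E]

theorem continuous_abs_of_hasSolidNorm : Continuous (fun z : E => |z|) :=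
  continuous_id.sup continuous_neg

/-- `z ↦ (b ⊔ -|z|) ⊓ |z|` is continuous, sends `a` to `b` and never increases `|z|`. -/
theorem LatticeOrderedAddCommGroup.IsSolid.closure {s : Set E} (hs : IsSolid s) :
    IsSolid (closure s) := by
  intro a ha b hba
  let f : E → E := fun z => (b ⊔ -|z|) ⊓ |z|
  have hf : Continuous f :=
    (continuous_const.sup continuous_abs_of_hasSolidNorm.neg).inf continuous_abs_of_hasSolidNorm
  have hfa : f a = b := by
    obtain ⟨hb, hnb⟩ := abs_le'.1 hba
    simp only [f, sup_eq_left.2 (neg_le.1 hnb), inf_eq_left.2 hb]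
  have hf_abs : ∀ z, |f z| ≤ |z| := fun z =>
    abs_le'.2 ⟨inf_le_right, neg_le.1 (le_inf le_sup_right (neg_le_self (abs_nonneg z)))⟩
  exact hfa ▸ map_mem_closure hf ha fun z hz => hs hz (hf_abs z)

end SolidNorm

section NormedLattice

variable {E : Type*} [NormedAddCommGroup E] [Lattice E] [IsOrderedAddMonoid E] [HasSolidNorm E]
  [NormedSpace ℝ E]

/-- The positive cone is closed, so nonnegativity passes from the dyadic multiples
`(⌊c 2ᵏ⌋ / 2ᵏ) • x` to their limit `c • x`. -/
theorem smul_nonneg_of_hasSolidNorm {c : ℝ} {x : E} (hc : 0 ≤ c) (hx : 0 ≤ x) : 0 ≤ c • x := by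
  have hdyadic : Tendsto (fun k : ℕ => ((⌊c * 2 ^ k⌋₊ : ℕ) : ℝ) / 2 ^ k) atTop (𝓝 c) :=
    (tendsto_nat_floor_mul_div_atTop hc).comp (tendsto_pow_atTop_atTop_of_one_lt one_lt_two)
  exact ge_of_tendsto' (hdyadic.smul_const x) fun k => dyadic_smul_nonneg hx _ k

instance HasSolidNorm.isOrderedModule : IsOrderedModule ℝ E :=
  .of_smul_nonneg fun _ hc _ hx => smul_nonneg_of_hasSolidNorm hc hx

theorem smul_le_abs_smul_abs (r : ℝ) (a : E) : r • a ≤ |r| • |a| := by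
  rcases le_total 0 r with hr | hr
  · rw [abs_of_nonneg hr]
    exact smul_le_smul_of_nonneg_left (le_abs_self a) hr
  · rw [abs_of_nonpos hr, ← neg_smul_neg]
    exact smul_le_smul_of_nonneg_left (neg_le_abs a) (neg_nonneg.2 hr)

theorem abs_smul_le_abs_smul_abs (r : ℝ) (a : E) : |r • a| ≤ |r| • |a| :=
  abs_le'.2 ⟨smul_le_abs_smul_abs r a, by
    simpa only [neg_smul, abs_neg] using smul_le_abs_smul_abs (-r) a⟩

theorem nonneg_of_smul_nonneg_of_pos {l : ℝ} {x : E} (hx : 0 < x) (h : 0 ≤ l • x) : 0 ≤ l := by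
  by_contra! hl
  have hlx : l • x = 0 := le_antisymm (smul_nonpos_of_nonpos_of_nonneg hl.le hx.le) h
  exact hx.ne' ((smul_eq_zero.1 hlx).resolve_left hl.ne)

theorem exists_not_smul_le {x : E} (hx : 0 < x) (w : E) : ∃ t : ℝ, ¬ t • x ≤ w := by
  by_contra! h
  have hxn : 0 < ‖x‖ := norm_pos_iff.2 hx.ne'
  set t := (‖w‖ + 1) / ‖x‖
  have htx : 0 ≤ t • x := smul_nonneg (by positivity) hx.le
  have hnorm : ‖t • x‖ ≤ ‖w‖ :=
    norm_le_norm_of_abs_le_abs <| by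
      rw [abs_of_nonneg htx, abs_of_nonneg (htx.trans (h t))]
      exact h t
  rw [norm_smul, Real.norm_of_nonneg (by positivity), div_mul_cancel₀ _ hxn.ne'] at hnorm
  linarith

/-- The sets `{t | w ≤ t • x}` and `{t | t • x ≤ w}` are closed, nonempty and cover the connected
line, so they meet. -/
theorem exists_smul_eq_of_le_total (htot : ∀ a b : E, a ≤ b ∨ b ≤ a) {x : E} (hx : 0 < x)
    (w : E) : ∃ t : ℝ, t • x = w := by
  have hcont : Continuous fun t : ℝ => t • x := continuous_id.smul continuous_const
  obtain ⟨t, -, hwt, htw⟩ := isPreconnected_closed_iff.1 isPreconnected_univ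
    {t : ℝ | w ≤ t • x} {t | t • x ≤ w} (isClosed_le continuous_const hcont)
    (isClosed_le hcont continuous_const) (fun t _ => htot w (t • x))
    (let ⟨t, ht⟩ := exists_not_smul_le hx w; ⟨t, trivial, (htot _ _).resolve_right ht⟩)
    (let ⟨t, ht⟩ := exists_not_smul_le hx (-w)
     ⟨-t, trivial, by
        rw [Set.mem_ofPred_eq, neg_smul]
        exact neg_le.1 ((htot _ _).resolve_left ht)⟩)
  exact ⟨t, le_antisymm htw hwt⟩

theorem rank_le_one_of_le_total (htot : ∀ a b : E, a ≤ b ∨ b ≤ a) : Module.rank ℝ E ≤ 1 := by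
  rw [rank_le_one_iff]
  by_cases hpos : ∃ x : E, 0 < x
  · obtain ⟨x, hx⟩ := hpos
    exact ⟨x, exists_smul_eq_of_le_total htot hx⟩
  · push Not at hpos
    refine ⟨0, fun w => ⟨0, ?_⟩⟩
    rw [smul_zero]
    rcases htot 0 w with h | h
    · exact h.eq_of_not_lt (hpos w)
    · exact (zero_eq_neg.1 ((neg_nonneg.2 h).eq_of_not_lt (hpos (-w)))).symm

def principalIdeal (u : E) : Submodule ℝ E where
  carrier := {y | ∃ c : ℝ, |y| ≤ c • u}
  zero_mem' := ⟨0, by simp⟩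
  add_mem' := by
    rintro a b ⟨c, hc⟩ ⟨d, hd⟩
    exact ⟨c + d, (abs_add_le a b).trans (add_smul c d u ▸ add_le_add hc hd)⟩
  smul_mem' := by
    rintro r a ⟨c, hc⟩
    exact ⟨|r| * c, (abs_smul_le_abs_smul_abs r a).trans
      (mul_smul |r| c u ▸ smul_le_smul_of_nonneg_left hc (abs_nonneg r))⟩

theorem mem_principalIdeal_self {u : E} (hu : 0 ≤ u) : u ∈ principalIdeal u :=
  ⟨1, by rw [one_smul, abs_of_nonneg hu]⟩

theorem principalIdeal_smul_le (u : E) (l : ℝ) : principalIdeal (l • u) ≤ principalIdeal u :=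
  fun _ ⟨c, hc⟩ => ⟨c * l, by rwa [mul_smul]⟩

theorem principalIdeal_zero : principalIdeal (0 : E) = ⊥ := by
  refine (Submodule.eq_bot_iff _).2 fun y ⟨c, hc⟩ => ?_
  rw [smul_zero] at hc
  exact le_antisymm ((le_abs_self y).trans hc) (neg_nonpos.1 ((neg_le_abs y).trans hc))

theorem isSolid_principalIdeal (u : E) : IsSolid (principalIdeal u : Set E) :=
  fun _ ⟨c, hc⟩ _ hyx => ⟨c, hyx.trans hc⟩

theorem isClosedIdeal_topologicalClosure_principalIdeal (u : E) :
    IsClosedIdeal (principalIdeal u).topologicalClosure := by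
  refine ⟨Submodule.isClosed_topologicalClosure _, fun a b hba ha => ?_⟩
  rw [← SetLike.mem_coe, Submodule.topologicalClosure_coe] at ha ⊢
  exact (isSolid_principalIdeal u).closure ha hba

theorem quasiInterior_iff_topologicalClosure_principalIdeal_eq_top (x : E) :
    QuasiInterior x ↔ (principalIdeal x).topologicalClosure = ⊤ := by
  rw [← Submodule.coe_eq_univ, Submodule.topologicalClosure_coe]
  rfl

theorem abs_inf_eq_zero_of_mem_principalIdeal {u v y : E} (hu : 0 ≤ u) (hv : 0 ≤ v)
    (huv : u ⊓ v = 0) (hy : y ∈ principalIdeal u) : |y| ⊓ v = 0 := by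
  obtain ⟨c, hc⟩ := hy
  set d := max c 1
  have hd : 0 < d := one_pos.trans_le (le_max_right c 1)
  have hyd : |y| ≤ d • u := hc.trans (smul_le_smul_of_nonneg_right (le_max_left c 1) hu)
  set e := |y| ⊓ v
  have he : 0 ≤ e := le_inf (abs_nonneg y) hv
  have hde : d⁻¹ • e ≤ u ⊓ v := by
    refine le_inf ?_ ?_
    · calc d⁻¹ • e ≤ d⁻¹ • (d • u) :=
            smul_le_smul_of_nonneg_left (inf_le_left.trans hyd) (by positivity)
        _ = u := inv_smul_smul₀ hd.ne' u
    · calc d⁻¹ • e ≤ (1 : ℝ) • e :=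
            smul_le_smul_of_nonneg_right (inv_le_one_of_one_le₀ (le_max_right c 1)) he
        _ ≤ v := (one_smul ℝ e).trans_le inf_le_right
  have h0 : d⁻¹ • e = 0 := le_antisymm (huv ▸ hde) (smul_nonneg (by positivity) he)
  exact (smul_eq_zero.1 h0).resolve_left (inv_ne_zero hd.ne')

end NormedLattice

section PositiveOperator

variable {E : Type*} [NormedAddCommGroup E] [Lattice E] [IsOrderedAddMonoid E] [HasSolidNorm E]
  [NormedSpace ℝ E] {T : E →L[ℝ] E}

namespace IsPositiveOp

theorem monotone (hT : IsPositiveOp T) : Monotone T := fun a b hab =>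
  sub_nonneg.1 (by simpa only [map_sub] using hT (b - a) (sub_nonneg.2 hab))

theorem abs_apply_le (hT : IsPositiveOp T) (y : E) : |T y| ≤ T |y| :=
  abs_le'.2 ⟨hT.monotone (le_abs_self y), by simpa only [map_neg] using hT.monotone (neg_le_abs y)⟩

theorem apply_mem_principalIdeal (hT : IsPositiveOp T) {u y : E} (hy : y ∈ principalIdeal u) :
    T y ∈ principalIdeal (T u) :=
  let ⟨c, hc⟩ := hy
  ⟨c, (hT.abs_apply_le y).trans (by simpa only [map_smul] using hT.monotone hc)⟩

theorem nonneg_of_apply_eq_smul (hT : IsPositiveOp T) {l : ℝ} {x : E} (hx : 0 < x)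
    (heig : T x = l • x) : 0 ≤ l :=
  nonneg_of_smul_nonneg_of_pos hx (heig ▸ hT x hx.le)

theorem eq_zero_of_quasiInterior (hT : IsPositiveOp T) {x : E} (hx : QuasiInterior x)
    (hTx : T x = 0) : T = 0 := by
  have hker : principalIdeal x ≤ LinearMap.ker (T : E →ₗ[ℝ] E) := fun y hy =>
    LinearMap.mem_ker.2 <| by
      simpa only [hTx, principalIdeal_zero, Submodule.mem_bot, ContinuousLinearMap.coe_coe] using
        hT.apply_mem_principalIdeal hy
  have hclosure := (principalIdeal x).topologicalClosure_minimal hker T.isClosed_ker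
  rw [(quasiInterior_iff_topologicalClosure_principalIdeal_eq_top x).1 hx, top_le_iff] at hclosure
  exact ContinuousLinearMap.ext fun y => LinearMap.mem_ker.1 (hclosure ▸ Submodule.mem_top)

end IsPositiveOp

theorem IdealIrreducible.topologicalClosure_principalIdeal_eq_top (hirr : IdealIrreducible T)
    {u : E} (hu : 0 < u) (hinv : ∀ y ∈ principalIdeal u, T y ∈ principalIdeal u) :
    (principalIdeal u).topologicalClosure = ⊤ := by
  refine (hirr _ (isClosedIdeal_topologicalClosure_principalIdeal u)
    fun y hy => map_mem_closure T.continuous hy hinv).resolve_left fun hbot => hu.ne' ?_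
  have hu_mem := (principalIdeal u).le_topologicalClosure (mem_principalIdeal_self hu.le)
  rwa [hbot, Submodule.mem_bot] at hu_mem

theorem IsPositiveOp.quasiInterior_of_apply_eq_smul (hT : IsPositiveOp T)
    (hirr : IdealIrreducible T) {l : ℝ} {x : E} (hx : 0 < x) (heig : T x = l • x) :
    QuasiInterior x :=
  (quasiInterior_iff_topologicalClosure_principalIdeal_eq_top x).2 <|
    hirr.topologicalClosure_principalIdeal_eq_top hx fun _ hy =>
      principalIdeal_smul_le x l (heig ▸ hT.apply_mem_principalIdeal hy)

/-- For disjoint `u, v > 0`, the closed ideal generated by `u` lies in the closed set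
`{z | |z| ⊓ v = 0}`, which misses `v`. -/
theorem rank_le_one_of_idealIrreducible_zero (hirr : IdealIrreducible (0 : E →L[ℝ] E)) :
    Module.rank ℝ E ≤ 1 := by
  refine rank_le_one_of_le_total <| le_total_of_forall_inf_ne_zero fun u v hu hv huv => ?_
  have htop := hirr.topologicalClosure_principalIdeal_eq_top hu fun _ _ => Submodule.zero_mem _
  have hv_mem : v ∈ closure (principalIdeal u : Set E) := by
    rw [← Submodule.topologicalClosure_coe, htop]
    trivial
  have hvv : |v| ⊓ v = 0 :=
    closure_minimal (fun _ hy => abs_inf_eq_zero_of_mem_principalIdeal hu.le hv.le huv hy)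
      (isClosed_eq (continuous_abs_of_hasSolidNorm.inf continuous_const) continuous_const) hv_mem
  rw [abs_of_nonneg hv.le, inf_idem] at hvv
  exact hv.ne' hvv

end PositiveOperator

theorem stmt2 [NormedAddCommGroup X] [Lattice X] [IsOrderedAddMonoid X] [HasSolidNorm X] [NormedSpace ℝ X]
    (hdim : 1 < Module.rank ℝ X)
    (T : X →L[ℝ] X) (hT : IsPositiveOp T) (hirr : IdealIrreducible T)
    (l : ℝ) (x : X) (hx : 0 < x) (heig : T x = l • x) :
    QuasiInterior x ∧ 0 < l := by
  have hQI := hT.quasiInterior_of_apply_eq_smul hirr hx heig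
  refine ⟨hQI, (hT.nonneg_of_apply_eq_smul hx heig).lt_of_ne ?_⟩
  rintro rfl
  obtain rfl : T = 0 := hT.eq_zero_of_quasiInterior hQI (by rw [heig, zero_smul])
  exact hdim.not_ge (rank_le_one_of_idealIrreducible_zero hirr)
end

section
/- Let T be a positive operator on a real Banach lattice such that some power T^k is σ-order-to-norm continuous, and suppose T*x* = λx* with λ ≠ 0. Then x* is σ-order continuous. -/
open scoped ENNReal

variable {X : Type*}

namespace ContinuousLinearMap

variable {𝕜 E : Type*} [NontriviallyNormedField 𝕜] [NormedAddCommGroup E] [NormedSpace 𝕜 E]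

theorem comp_pow_eq_pow_smul_of_comp_eq_smul {T : E →L[𝕜] E} {f : StrongDual 𝕜 E} {l : 𝕜}
    (h : f.comp T = l • f) (n : ℕ) : f.comp (T ^ n) = l ^ n • f := by
  induction n with
  | zero => ext; simp
  | succ n ih =>
    calc f.comp (T ^ (n + 1)) = (f.comp (T ^ n)).comp T := by rw [pow_succ]; rfl
      _ = l ^ (n + 1) • f := by rw [ih, smul_comp, h, smul_smul, pow_succ]

theorem tendsto_apply_zero_of_comp_eq_smul {S : E →L[𝕜] E} {f : StrongDual 𝕜 E} {c : 𝕜}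
    (h : f.comp S = c • f) (hc : c ≠ 0) {u : ℕ → E}
    (hu : Filter.Tendsto (fun n => ‖S (u n)‖) Filter.atTop (nhds 0)) :
    Filter.Tendsto (fun n => f (u n)) Filter.atTop (nhds 0) := by
  have hfS : Filter.Tendsto (fun n => f (S (u n))) Filter.atTop (nhds 0) :=
    (map_zero f ▸ f.continuous.tendsto 0).comp (tendsto_zero_iff_norm_tendsto_zero.mpr hu)
  have hf : (fun n => f (u n)) = fun n => c⁻¹ * f (S (u n)) := funext fun n => by
    rw [← comp_apply, h, smul_apply, smul_eq_mul, inv_mul_cancel_left₀ hc]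
  rw [hf]
  simpa only [mul_zero] using hfS.const_mul c⁻¹

end ContinuousLinearMap

open Filter in
theorem stmt11_general [NormedAddCommGroup X] [Lattice X] [IsOrderedAddMonoid X] [HasSolidNorm X] [NormedSpace ℝ X]
    (T : X →L[ℝ] X)
    (k : ℕ)
    (hotn : ∀ u : ℕ → X, Antitone u → IsGLB (Set.range u) 0 →
      Tendsto (fun n => ‖(T ^ k) (u n)‖) atTop (nhds 0))
    (l : ℝ) (hl : l ≠ 0) (f : StrongDual ℝ X)
    (heig : adjOp T f = l • f) :
    SigmaOrderContinuousFunc f := by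
  have hpow : f.comp (T ^ k) = l ^ k • f :=
    ContinuousLinearMap.comp_pow_eq_pow_smul_of_comp_eq_smul heig k
  intro u hu hglb
  exact ContinuousLinearMap.tendsto_apply_zero_of_comp_eq_smul hpow (pow_ne_zero k hl)
    (hotn u hu hglb)

open Filter in
theorem stmt11 [NormedAddCommGroup X] [Lattice X] [IsOrderedAddMonoid X] [HasSolidNorm X] [NormedSpace ℝ X]
    (T : X →L[ℝ] X) (hT : IsPositiveOp T)
    (k : ℕ) (hk : 1 ≤ k)
    (hotn : ∀ u : ℕ → X, Antitone u → IsGLB (Set.range u) 0 →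
      Tendsto (fun n => ‖(T ^ k) (u n)‖) atTop (nhds 0))
    (l : ℝ) (hl : l ≠ 0) (f : StrongDual ℝ X)
    (heig : adjOp T f = l • f) :
    SigmaOrderContinuousFunc f :=
  stmt11_general T k hotn l hl f heig
end
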